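/- For all pairwise disjoint sets of vertices W, X, Y, Z in a directed acyclic graph G: if W is d-separated from X given Y ∪ Z, and W is d-separated from Y given X ∪ Z, then W is d-separated from X ∪ Y given Z. -/
import Mathlib


attribute [local instance] Classical.propDecidable

/-- A directed graph on vertex type `V` is given by an edge relation.
`Desc E a b` means `b` is a descendant of `a` (including `a` itself). -/
def Desc {V : Type} (E : V → V → Prop) : V → V → Prop := Relation.ReflTransGen E

/-- Acyclicity of a directed graph. -/
def Acyclic {V : Type} (E : V → V → Prop) : Prop := ∀ v, ¬ Relation.TransGen E v v

/-- A (possibly undirected-traversal) walk in the digraph: a nonempty list of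
vertices where consecutive vertices are joined by an edge in some direction. -/
def IsWalk {V : Type} (E : V → V → Prop) (p : List V) : Prop :=
  p ≠ [] ∧ p.Chain' (fun a b => E a b ∨ E b a)

/-- A consecutive triple `a, b, c` of a path blocks it w.r.t. `S` if either
`b` is a collider (`a → b ← c`) none of whose descendants (incl. itself) is in `S`,
or `b` is a non-collider (chain or fork) belonging to `S`. -/
def BlockedTriple {V : Type} (E : V → V → Prop) (S : Set V) (a b c : V) : Prop :=
  (E a b ∧ E c b ∧ ∀ w, Desc E b w → w ∉ S) ∨ (¬ (E a b ∧ E c b) ∧ b ∈ S)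

/-- A path (list of vertices) is d-separated (blocked) by `S`. -/
def BlocksPath {V : Type} (E : V → V → Prop) (S : Set V) (p : List V) : Prop :=
  (∃ x, p.head? = some x ∧ x ∈ S) ∨ (∃ x, p.getLast? = some x ∧ x ∈ S) ∨
  (∃ l a b c r, p = l ++ a :: b :: c :: r ∧ BlockedTriple E S a b c)

/-- `A` is d-separated from `B` given `S`: every walk from `A` to `B` is blocked by `S`. -/
def DSep {V : Type} (E : V → V → Prop) (A B S : Set V) : Prop :=
  ∀ p : List V, IsWalk E p → (∃ a ∈ A, p.head? = some a) →
    (∃ b ∈ B, p.getLast? = some b) → BlocksPath E S p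


lemma blocks_of_triple {V : Type} (E : V → V → Prop) (S : Set V)
    (l : List V) (a b c : V) (r : List V)
    (h : BlockedTriple E S a b c) :
    BlocksPath E S (l ++ a :: b :: c :: r) :=
  Or.inr (Or.inr ⟨l, a, b, c, r, rfl, h⟩)

lemma exists_shorter {V : Type} (E : V → V → Prop) (W A B Z : Set V)
    (hWA : Disjoint W A) (hWB : Disjoint W B) (hWZ : Disjoint W Z)
    (hAB : Disjoint A B) (hAZ : Disjoint A Z) (hBZ : Disjoint B Z)
    (h : DSep E W A (B ∪ Z))
    (p : List V) (hw : IsWalk E p)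
    (hh : ∃ w ∈ W, p.head? = some w)
    (hl : ∃ a ∈ A, p.getLast? = some a)
    (hnb : ¬ BlocksPath E Z p) :
    ∃ q : List V, IsWalk E q ∧ q.length < p.length ∧
      (∃ w ∈ W, q.head? = some w) ∧ (∃ b ∈ B, q.getLast? = some b) ∧
      ¬ BlocksPath E Z q := by
  obtain ⟨w, hwW, hwh⟩ := hh
  obtain ⟨t, htA, htl⟩ := hl
  have hb := h p hw ⟨w, hwW, hwh⟩ ⟨t, htA, htl⟩
  rcases hb with ⟨x, hx, hxS⟩ | ⟨x, hx, hxS⟩ | ⟨l, a, b, c, r, hp, htrip⟩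
  · rw [hwh] at hx
    cases Option.some.inj hx
    rcases hxS with hxB | hxZ
    · exact absurd hxB (Set.disjoint_left.mp hWB hwW)
    · exact absurd hxZ (Set.disjoint_left.mp hWZ hwW)
  · rw [htl] at hx
    cases Option.some.inj hx
    rcases hxS with hxB | hxZ
    · exact absurd hxB (Set.disjoint_left.mp hAB htA)
    · exact absurd hxZ (Set.disjoint_left.mp hAZ htA)
  · subst hp
    rcases htrip with ⟨hab, hcb, hd⟩ | ⟨hnc, hbS⟩
    · exact absurd (blocks_of_triple E Z l a b c r
        (Or.inl ⟨hab, hcb, fun u hu huZ => hd u hu (Or.inr huZ)⟩)) hnb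
    · rcases hbS with hbB | hbZ
      · have hqh : (l ++ [a, b]).head? = some w := by rw [← hwh]; cases l <;> simp
        refine ⟨l ++ [a, b], ⟨by simp, ?_⟩,
          by simp only [List.length_append, List.length_cons, List.length_nil]; omega, ⟨w, hwW, hqh⟩,
          ⟨b, hbB, by simp⟩, ?_⟩
        · exact hw.2.prefix ⟨c :: r, by simp⟩
        · intro hbq
          rcases hbq with ⟨x, hx, hxZ⟩ | ⟨x, hx, hxZ⟩ | ⟨l', a', b', c', r', hq, ht'⟩
          · rw [hqh] at hx
            cases Option.some.inj hx
            exact Set.disjoint_left.mp hWZ hwW hxZ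
          · have hx2 : b = x := by simpa using hx
            subst hx2
            exact Set.disjoint_left.mp hBZ hbB hxZ
          · apply hnb
            refine Or.inr (Or.inr ⟨l', a', b', c', r' ++ c :: r, ?_, ht'⟩)
            have : l ++ a :: b :: c :: r = (l ++ [a, b]) ++ c :: r := by simp
            rw [this, hq]; simp
      · exact absurd (blocks_of_triple E Z l a b c r (Or.inr ⟨hnc, hbZ⟩)) hnb

/-- d-separation intersection property:
for pairwise disjoint vertex sets `W, X, Y, Z` of a DAG,
`(W ⟂ X | Y ∪ Z)` and `(W ⟂ Y | X ∪ Z)` imply `(W ⟂ X ∪ Y | Z)`. -/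
theorem dsep_intersection {V : Type} (E : V → V → Prop) (hacyc : Acyclic E)
    (W X Y Z : Set V)
    (hWX : Disjoint W X) (hWY : Disjoint W Y) (hWZ : Disjoint W Z)
    (hXY : Disjoint X Y) (hXZ : Disjoint X Z) (hYZ : Disjoint Y Z)
    (h1 : DSep E W X (Y ∪ Z)) (h2 : DSep E W Y (X ∪ Z)) :
    DSep E W (X ∪ Y) Z := by
  have key : ∀ n (p : List V), p.length ≤ n → IsWalk E p →
      (∃ w ∈ W, p.head? = some w) → (∃ t ∈ X ∪ Y, p.getLast? = some t) →
      BlocksPath E Z p := by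
    intro n
    induction n with
    | zero =>
      intro p hlen hw hh _
      obtain ⟨w, _, hwh⟩ := hh
      have : p = [] := List.length_eq_zero_iff.mp (Nat.le_zero.mp hlen)
      subst this; simp at hwh
    | succ n ih =>
      intro p hlen hw hh hl
      by_contra hnb
      obtain ⟨t, htXY, htl⟩ := hl
      rcases htXY with htX | htY
      · obtain ⟨q, hq, hql, hqh, ⟨b, hbB, hbl⟩, hqnb⟩ :=
          exists_shorter E W X Y Z hWX hWY hWZ hXY hXZ hYZ h1 p hw hh ⟨t, htX, htl⟩ hnb
        exact hqnb (ih q (by omega) hq hqh ⟨b, Or.inr hbB, hbl⟩)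
      · obtain ⟨q, hq, hql, hqh, ⟨b, hbB, hbl⟩, hqnb⟩ :=
          exists_shorter E W Y X Z hWY hWX hWZ hXY.symm hYZ hXZ h2 p hw hh ⟨t, htY, htl⟩ hnb
        exact hqnb (ih q (by omega) hq hqh ⟨b, Or.inl hbB, hbl⟩)
  exact fun p hw hh hl => key p.length p le_rfl hw hh hl
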